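/- arXiv:1505.05996 — 3 statements merged into one kernel-verified Lean document; each statement's English description precedes it below -/
import Mathlib

section
/- If R and S are multiple relations and L ⊆ I satisfies J_R ∩ J_S ⊆ L ⊆ J_R ∪ J_S, then (R ⋈ S)|L = R|(L ∩ J_R) ⋈ S|(L ∩ J_S). In particular this holds for every L ⊆ J_R ∪ J_S when J_R ∩ J_S = ∅. -/
open Classical

variable {I : Type*}

/-- A `J`-family: a choice of an element of `E j` for each `j ∈ J`. -/
abbrev Fam (E : I → Type*) (J : Set I) : Type _ := ∀ j : J, E j

/-- Restriction of a `J`-family to a subset `K ⊆ J`. -/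
def restrictFam {E : I → Type*} {J K : Set I} (h : K ⊆ J) (x : Fam E J) : Fam E K :=
  fun k => x ⟨k.1, h k.2⟩

/-- Transport of a family along an equality of index sets. -/
def castFam {E : I → Type*} {J K : Set I} (h : J = K) (x : Fam E J) : Fam E K :=
  h ▸ x

/-- Two families are compatible if they agree on the intersection of their domains. -/
def Compatible {E : I → Type*} {J K : Set I} (x : Fam E J) (y : Fam E K) : Prop :=
  ∀ (i : I) (hJ : i ∈ J) (hK : i ∈ K), x ⟨i, hJ⟩ = y ⟨i, hK⟩

/-- The sum (merge) of two families: the `J ∪ K`-family restricting to `x` on `J`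
(and, when `x` and `y` are compatible, to `y` on `K`). -/
noncomputable def merge {E : I → Type*} {J K : Set I} (x : Fam E J) (y : Fam E K) :
    Fam E (J ∪ K) :=
  fun i => if h : i.1 ∈ J then x ⟨i.1, h⟩ else y ⟨i.1, i.2.resolve_left h⟩

/-- A multiple relation: a domain `dom ⊆ I` together with a graph of `dom`-families. -/
structure MRel (E : I → Type*) where
  dom : Set I
  graph : Set (Fam E dom)

/-- The join of two multiple relations. -/
def MRel.join {E : I → Type*} (R S : MRel E) : MRel E where
  dom := R.dom ∪ S.dom
  graph := {x | restrictFam Set.subset_union_left x ∈ R.graph ∧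
    restrictFam Set.subset_union_right x ∈ S.graph}

/-- The restriction of a multiple relation to a subset `K` of its domain. -/
def MRel.restr {E : I → Type*} (R : MRel E) (K : Set I) (h : K ⊆ R.dom) : MRel E :=
  ⟨K, restrictFam h '' R.graph⟩

/-- The full (trivial) relation on `J`. -/
def MRel.full (E : I → Type*) (J : Set I) : MRel E := ⟨J, Set.univ⟩

/-- Inclusion of multiple relations: equal domains and inclusion of graphs. -/
def MRel.le {E : I → Type*} (R S : MRel E) : Prop :=
  ∃ h : R.dom = S.dom, ∀ x ∈ R.graph, castFam h x ∈ S.graph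

section Families

variable {E : I → Type*} {J K L : Set I}

theorem restrictFam_eq_restrictFam_iff {hJ : L ⊆ J} {hK : L ⊆ K} {x : Fam E J} {y : Fam E K} :
    restrictFam hJ x = restrictFam hK y ↔ ∀ i (hi : i ∈ L), x ⟨i, hJ hi⟩ = y ⟨i, hK hi⟩ := by
  simp only [funext_iff, Subtype.forall, restrictFam]

theorem restrictFam_merge_left (x : Fam E J) (y : Fam E K) :
    restrictFam Set.subset_union_left (merge x y) = x := by
  funext i
  simp only [restrictFam, merge, dif_pos i.2]

theorem restrictFam_merge_right {x : Fam E J} {y : Fam E K} (hxy : Compatible x y) :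
    restrictFam Set.subset_union_right (merge x y) = y := by
  funext ⟨i, hi⟩
  by_cases hiJ : i ∈ J
  · simp only [restrictFam, merge, dif_pos hiJ, hxy i hiJ hi]
  · simp only [restrictFam, merge, dif_neg hiJ]

end Families

namespace MRel

variable {E : I → Type*}

theorem ext_of_dom_eq {R S : MRel E} (h : R.dom = S.dom)
    (hgraph : ∀ x : Fam E S.dom, restrictFam h.le x ∈ R.graph ↔ x ∈ S.graph) : R = S := by
  obtain ⟨dom, graph⟩ := R
  obtain ⟨_, _⟩ := S
  dsimp only at h hgraph
  subst h
  congr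
  ext x
  exact hgraph x

theorem join_restr (R S : MRel E) (L : Set I) (hL : L ⊆ R.dom ∪ S.dom)
    (hRS : R.dom ∩ S.dom ⊆ L) :
    (R.join S).restr L hL =
      (R.restr (L ∩ R.dom) Set.inter_subset_right).join
        (S.restr (L ∩ S.dom) Set.inter_subset_right) := by
  refine ext_of_dom_eq (by simp [join, restr, ← Set.inter_union_distrib_left, hL]) fun x => ?_
  constructor
  · rintro ⟨y, ⟨hyR, hyS⟩, hyx⟩
    replace hyx := restrictFam_eq_restrictFam_iff.1 hyx
    refine ⟨⟨_, hyR, ?_⟩, ⟨_, hyS, ?_⟩⟩ <;>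
      exact restrictFam_eq_restrictFam_iff.2 fun i hi => hyx i hi.1
  -- The two witnesses glue by `merge`: on `R.dom ∩ S.dom ⊆ L` both agree with `x`.
  · rintro ⟨⟨a, ha, hax⟩, ⟨b, hb, hbx⟩⟩
    replace hax := restrictFam_eq_restrictFam_iff.1 hax
    replace hbx := restrictFam_eq_restrictFam_iff.1 hbx
    have hab : Compatible a b := fun i hiR hiS => by
      rw [hax i ⟨hRS ⟨hiR, hiS⟩, hiR⟩, hbx i ⟨hRS ⟨hiR, hiS⟩, hiS⟩]
    refine ⟨merge a b, ⟨?_, ?_⟩, restrictFam_eq_restrictFam_iff.2 fun i hiL => ?_⟩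
    · rwa [restrictFam_merge_left]
    · rwa [restrictFam_merge_right hab]
    · by_cases hiR : i ∈ R.dom
      · simp only [merge, dif_pos hiR, hax i ⟨hiL, hiR⟩]
        rfl
      · have hiS : i ∈ S.dom := (hL hiL).resolve_left hiR
        simp only [merge, dif_neg hiR, hbx i ⟨hiL, hiS⟩]
        rfl

end MRel

theorem stmt9 {E : I → Type*} :
    (∀ (R S : MRel E) (L : Set I) (hL : L ⊆ R.dom ∪ S.dom),
      R.dom ∩ S.dom ⊆ L →
        (R.join S).restr L hL =
          (R.restr (L ∩ R.dom) Set.inter_subset_right).join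
            (S.restr (L ∩ S.dom) Set.inter_subset_right)) ∧
    (∀ (R S : MRel E), R.dom ∩ S.dom = ∅ →
      ∀ (L : Set I) (hL : L ⊆ R.dom ∪ S.dom),
        (R.join S).restr L hL =
          (R.restr (L ∩ R.dom) Set.inter_subset_right).join
            (S.restr (L ∩ S.dom) Set.inter_subset_right)) :=
  ⟨MRel.join_restr, fun R S hRS L hL =>
    MRel.join_restr R S L hL (hRS ▸ Set.empty_subset L)⟩
end

section
/- Let T be a multiple relation with nonempty graph and (K, L) a bipartition of its domain J_T (K, L nonempty, disjoint, with union J_T). If T = R ⋈ S for some relations R, S with domains K and L respectively, then necessarily R = T|K and S = T|L; in particular such a factorization is unique. -/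
open Classical

variable {I : Type*}

theorem stmt12 {E : I → Type*} (T R S : MRel E) (hT : T.graph.Nonempty)
    (K L : Set I) (hKne : K.Nonempty) (hLne : L.Nonempty) (hdisj : Disjoint K L)
    (hcov : K ∪ L = T.dom) (hK : K ⊆ T.dom) (hL : L ⊆ T.dom)
    (hRdom : R.dom = K) (hSdom : S.dom = L) (hfac : T = R.join S) :
    R = T.restr K hK ∧ S = T.restr L hL := by

  subst hfac
  obtain ⟨RD, GR⟩ := R
  obtain ⟨SD, GS⟩ := S
  dsimp only at hRdom hSdom
  subst hRdom; subst hSdom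
  obtain ⟨s0, hs0r, hs0s⟩ := hT
  have hmergeK : ∀ (r : Fam E RD) (s : Fam E SD),
      restrictFam (J := RD ∪ SD) Set.subset_union_left (merge r s) = r := by
    intro r s
    funext k
    simp only [restrictFam, merge]
    rw [dif_pos k.2]
  have hmergeL : ∀ (r : Fam E RD) (s : Fam E SD),
      restrictFam (J := RD ∪ SD) Set.subset_union_right (merge r s) = s := by
    intro r s
    funext k
    have hk : (k : I) ∉ RD := fun hk => hdisj.ne_of_mem hk k.2 rfl
    simp only [restrictFam, merge]
    rw [dif_neg hk]
  constructor
  · show (⟨RD, GR⟩ : MRel E) = ⟨RD, _⟩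
    congr 1
    ext r
    constructor
    · intro hr
      exact ⟨merge r (restrictFam Set.subset_union_right s0),
        ⟨by rw [hmergeK]; exact hr, by rw [hmergeL]; exact hs0s⟩, hmergeK _ _⟩
    · rintro ⟨x, ⟨hx, -⟩, rfl⟩
      exact hx
  · show (⟨SD, GS⟩ : MRel E) = ⟨SD, _⟩
    congr 1
    ext s
    constructor
    · intro hs
      exact ⟨merge (restrictFam Set.subset_union_left s0) s,
        ⟨by rw [hmergeK]; exact hs0r, by rw [hmergeL]; exact hs⟩, hmergeL _ _⟩
    · rintro ⟨x, ⟨-, hx⟩, rfl⟩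
      exact hx
end

section
/- Brunn's theorem for multiple relations: for every set I, setting E_i = ({0,1}^(P(I))) for all i ∈ I, every integral connectivity structure 𝒦 on I equals the connectivity structure K_R of some multiple relation R with domain I in this family; specifically, one may take R to be the relation whose graph consists of the families (f_i)_{i∈I} (each f_i : P(I) → {0,1}) such that for every nonempty K ∈ 𝒦 there exists i ∈ K with f_i(K) = 1. -/
open Classical

variable {I : Type*}

/-- `A` is splittable for `R`: `A ⊆ J_R` and the restriction `R|A` splits along
some bipartition `(K, L)` of `A`. -/
def SplittableFor {E : I → Type*} (R : MRel E) (A : Set I) : Prop :=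
  ∃ (K L : Set I) (hK : K ⊆ R.dom) (hL : L ⊆ R.dom) (hA : A ⊆ R.dom),
    K.Nonempty ∧ L.Nonempty ∧ Disjoint K L ∧ K ∪ L = A ∧
      R.restr A hA = (R.restr K hK).join (R.restr L hL)

/-- The connectivity structure of `R`: the subsets of `J_R` that are not splittable. -/
def connStruct {E : I → Type*} (R : MRel E) : Set (Set I) :=
  {A | A ⊆ R.dom ∧ ¬ SplittableFor R A}


/-- Brunn's relation associated with a connectivity structure `𝒦` on `I`:
here `E i = ({0,1}ᴾ⁽ᴵ⁾)` for every `i`, and a family `(f_i)_{i ∈ I}` is compatible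
iff for every nonempty `K ∈ 𝒦` there is `i ∈ K` with `f_i K = 1`. -/
def brunnRel (𝒦 : Set (Set I)) : MRel (fun _ : I => Set I → Bool) :=
  ⟨Set.univ, {f | ∀ K ∈ 𝒦, K.Nonempty →
    ∃ (i : I) (hi : i ∈ K), f ⟨i, Set.mem_univ i⟩ K = true}⟩

/-!
A set `A ∈ 𝒦` is not splittable: for a bipartition `(K, L)` of `A`, the family that is `0` at
every coordinate `(i, A)` agrees on `K` with a member of the relation that is `1` at `(i, A)`
exactly for `i ∈ L`, and symmetrically on `L`, yet it violates the constraint attached to `A`.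
Conversely, a nonempty `A ∉ 𝒦` is the disjoint union of the largest member of `𝒦` inside `A`
through a point `a ∈ A` and its complement in `A`; every member of `𝒦` inside `A` lies on one side,
so members of the relation agreeing with a family on the two sides can be glued into one.
-/

namespace MRel

variable {E : I → Type*}

theorem restr_union_eq_join_iff (R : MRel E) {K L : Set I} (hK : K ⊆ R.dom) (hL : L ⊆ R.dom)
    (hKL : K ∪ L ⊆ R.dom) :
    R.restr (K ∪ L) hKL = (R.restr K hK).join (R.restr L hL) ↔
      ∀ x : Fam E (K ∪ L), restrictFam Set.subset_union_left x ∈ restrictFam hK '' R.graph →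
        restrictFam Set.subset_union_right x ∈ restrictFam hL '' R.graph →
          x ∈ restrictFam hKL '' R.graph := by
  simp only [restr, join, MRel.mk.injEq, heq_eq_eq, true_and]
  constructor
  · intro h x hxK hxL
    rw [h]
    exact ⟨hxK, hxL⟩
  · intro h
    ext x
    constructor
    · rintro ⟨u, hu, rfl⟩
      exact ⟨⟨u, hu, rfl⟩, ⟨u, hu, rfl⟩⟩
    · rintro ⟨hxK, hxL⟩
      exact h x hxK hxL

end MRel

section ConnectivityStructure

variable {𝒦 : Set (Set I)}

theorem union_mem_of_inter_nonempty (hconn : ∀ C ⊆ 𝒦, (⋂₀ C).Nonempty → ⋃₀ C ∈ 𝒦)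
    {C D : Set I} (hC : C ∈ 𝒦) (hD : D ∈ 𝒦) (hCD : (C ∩ D).Nonempty) : C ∪ D ∈ 𝒦 := by
  have := hconn {C, D} (by rintro X (rfl | rfl) <;> assumption) (by rwa [Set.sInter_pair])
  rwa [Set.sUnion_pair] at this

def component (𝒦 : Set (Set I)) (A : Set I) (a : I) : Set I :=
  ⋃₀ {C | C ∈ 𝒦 ∧ a ∈ C ∧ C ⊆ A}

theorem component_subset (A : Set I) (a : I) : component 𝒦 A a ⊆ A :=
  Set.sUnion_subset fun _ hC => hC.2.2

theorem mem_component (hsing : ∀ i : I, {i} ∈ 𝒦) {A : Set I} {a : I} (ha : a ∈ A) :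
    a ∈ component 𝒦 A a :=
  ⟨{a}, ⟨hsing a, rfl, Set.singleton_subset_iff.mpr ha⟩, rfl⟩

theorem component_mem (hconn : ∀ C ⊆ 𝒦, (⋂₀ C).Nonempty → ⋃₀ C ∈ 𝒦) (A : Set I) (a : I) :
    component 𝒦 A a ∈ 𝒦 :=
  hconn _ (fun _ hC => hC.1) ⟨a, fun _ hC => hC.2.1⟩

theorem subset_component_of_inter_nonempty (hsing : ∀ i : I, {i} ∈ 𝒦)
    (hconn : ∀ C ⊆ 𝒦, (⋂₀ C).Nonempty → ⋃₀ C ∈ 𝒦) {A C : Set I} {a : I} (ha : a ∈ A)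
    (hC : C ∈ 𝒦) (hCA : C ⊆ A) (hmeet : (C ∩ component 𝒦 A a).Nonempty) :
    C ⊆ component 𝒦 A a := by
  have hunion : C ∪ component 𝒦 A a ∈ 𝒦 :=
    union_mem_of_inter_nonempty hconn hC (component_mem hconn A a) hmeet
  have hsub : C ∪ component 𝒦 A a ⊆ component 𝒦 A a :=
    Set.subset_sUnion_of_mem
      ⟨hunion, Or.inr (mem_component hsing ha), Set.union_subset hCA (component_subset A a)⟩
  exact Set.subset_union_left.trans hsub

theorem exists_separation_of_notMem (hsing : ∀ i : I, {i} ∈ 𝒦)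
    (hconn : ∀ C ⊆ 𝒦, (⋂₀ C).Nonempty → ⋃₀ C ∈ 𝒦) {A : Set I} (hA : A ∉ 𝒦) {a : I}
    (ha : a ∈ A) :
    ∃ K L : Set I, K.Nonempty ∧ L.Nonempty ∧ Disjoint K L ∧ K ∪ L = A ∧
      ∀ C ∈ 𝒦, C ⊆ A → C ⊆ K ∨ C ⊆ L := by
  have hsub := component_subset (𝒦 := 𝒦) A a
  refine ⟨component 𝒦 A a, A \ component 𝒦 A a, ⟨a, mem_component hsing ha⟩, ?_,
    Set.disjoint_sdiff_right, Set.union_sdiff_cancel hsub, fun C hC hCA => ?_⟩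
  · rw [Set.sdiff_nonempty]
    intro hA_sub
    exact hA (Set.Subset.antisymm hsub hA_sub ▸ component_mem hconn A a)
  · by_cases hmeet : (C ∩ component 𝒦 A a).Nonempty
    · exact Or.inl (subset_component_of_inter_nonempty hsing hconn ha hC hCA hmeet)
    · exact Or.inr fun i hi => ⟨hCA hi, fun hic => hmeet ⟨i, hi, hic⟩⟩

end ConnectivityStructure

section BrunnRelation

variable {𝒦 : Set (Set I)}

noncomputable def brunnCut (A M : Set I) : Fam (fun _ : I => Set I → Bool) Set.univ :=
  fun i S => decide (S ≠ A ∨ i.1 ∈ M)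

theorem brunnCut_mem_graph {A M : Set I} (hAM : (A ∩ M).Nonempty) :
    brunnCut A M ∈ (brunnRel 𝒦).graph := by
  rintro C - ⟨i, hi⟩
  by_cases hCA : C = A
  · subst hCA
    obtain ⟨j, hjC, hjM⟩ := hAM
    exact ⟨j, hjC, by simp [brunnCut, hjM]⟩
  · exact ⟨i, hi, by simp [brunnCut, hCA]⟩

theorem not_splittableFor_brunnRel_of_mem {A : Set I} (hA : A ∈ 𝒦) :
    ¬ SplittableFor (brunnRel 𝒦) A := by
  rintro ⟨K, L, hK, hL, hKL, ⟨k, hk⟩, ⟨l, hl⟩, hdisj, rfl, hsplit⟩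
  obtain ⟨w, hw, hwx⟩ := ((brunnRel 𝒦).restr_union_eq_join_iff hK hL hKL).1 hsplit
    (restrictFam hKL (brunnCut (K ∪ L) ∅))
    ⟨brunnCut (K ∪ L) L, brunnCut_mem_graph ⟨l, Or.inr hl, hl⟩, funext fun j => funext fun S => by
      simp [restrictFam, brunnCut, Set.disjoint_left.1 hdisj j.2]⟩
    ⟨brunnCut (K ∪ L) K, brunnCut_mem_graph ⟨k, Or.inl hk, hk⟩, funext fun j => funext fun S => by
      simp [restrictFam, brunnCut, Set.disjoint_right.1 hdisj j.2]⟩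
  obtain ⟨i, hi, hwi⟩ := hw _ hA ⟨k, Or.inl hk⟩
  have := congrFun (congrFun hwx ⟨i, hi⟩) (K ∪ L)
  simp only [restrictFam, brunnCut, ne_eq, not_true_eq_false, Set.mem_empty_iff_false, or_self,
    decide_false] at this
  exact Bool.false_ne_true (this.symm.trans hwi)

theorem splittableFor_brunnRel_of_separated {K L : Set I} (hK : K.Nonempty) (hL : L.Nonempty)
    (hdisj : Disjoint K L) (hsep : ∀ C ∈ 𝒦, C ⊆ K ∪ L → C ⊆ K ∨ C ⊆ L) :
    SplittableFor (brunnRel 𝒦) (K ∪ L) := by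
  have hdom {M : Set I} : M ⊆ (brunnRel 𝒦).dom := Set.subset_univ M
  refine ⟨K, L, hdom, hdom, hdom, hK, hL, hdisj, rfl,
    ((brunnRel 𝒦).restr_union_eq_join_iff hdom hdom hdom).2 ?_⟩
  rintro x ⟨u, hu, hux⟩ ⟨v, hv, hvx⟩
  refine ⟨fun i => if i.1 ∈ K then u i else if i.1 ∈ L then v i else fun _ => true, ?_, ?_⟩
  · intro C hC hCne
    by_cases hCKL : C ⊆ K ∪ L
    · rcases hsep C hC hCKL with hCK | hCL
      · obtain ⟨i, hi, hui⟩ := hu C hC hCne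
        exact ⟨i, hi, by simpa [hCK hi] using hui⟩
      · obtain ⟨i, hi, hvi⟩ := hv C hC hCne
        exact ⟨i, hi, by simpa [hCL hi, Set.disjoint_right.1 hdisj (hCL hi)] using hvi⟩
    · obtain ⟨i, hi, hiKL⟩ := Set.not_subset.1 hCKL
      rw [Set.mem_union, not_or] at hiKL
      exact ⟨i, hi, by simp [hiKL.1, hiKL.2]⟩
  · funext ⟨i, hi⟩
    rcases hi with hiK | hiL
    · simpa [restrictFam, hiK] using congrFun hux ⟨i, hiK⟩
    · simpa [restrictFam, hiL, Set.disjoint_right.1 hdisj hiL] using congrFun hvx ⟨i, hiL⟩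

end BrunnRelation

theorem stmt19 {I : Type*} (𝒦 : Set (Set I))
    (hempty : ∅ ∈ 𝒦)
    (hsing : ∀ i : I, {i} ∈ 𝒦)
    (hconn : ∀ C ⊆ 𝒦, (⋂₀ C).Nonempty → ⋃₀ C ∈ 𝒦) :
    connStruct (brunnRel 𝒦) = 𝒦 := by
  ext A
  refine ⟨fun ⟨_, hns⟩ => ?_, fun hA => ⟨Set.subset_univ A, not_splittableFor_brunnRel_of_mem hA⟩⟩
  by_contra hA
  obtain ⟨a, ha⟩ : A.Nonempty := Set.nonempty_iff_ne_empty.2 <| by rintro rfl; exact hA hempty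
  obtain ⟨K, L, hK, hL, hdisj, rfl, hsep⟩ := exists_separation_of_notMem hsing hconn hA ha
  exact hns (splittableFor_brunnRel_of_separated hK hL hdisj hsep)
end
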